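/- Let n ≥ 1, let V : ℝⁿ → ℝ be a continuous real-valued function, and let φ : ℝⁿ → ℂ be a C² function such that f = exp ∘ φ is square integrable on ℝⁿ, the gradient ∇f is square integrable on ℝⁿ, and -Δf + V·f = 0 on ℝⁿ. Assume moreover that Im φ is bounded. Then Im φ is constant on ℝⁿ. -/

import Mathlib

noncomputable section

open MeasureTheory Complex

/-- Partial derivative in the `i`-th coordinate direction of a complex-valued function. -/
def cpderiv {n : ℕ} (f : EuclideanSpace ℝ (Fin n) → ℂ) (i : Fin n)
    (x : EuclideanSpace ℝ (Fin n)) : ℂ :=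
  fderiv ℝ f x (EuclideanSpace.single i 1)

/-- Partial derivative in the `i`-th coordinate direction of a real-valued function. -/
def rpderiv {n : ℕ} (g : EuclideanSpace ℝ (Fin n) → ℝ) (i : Fin n)
    (x : EuclideanSpace ℝ (Fin n)) : ℝ :=
  fderiv ℝ g x (EuclideanSpace.single i 1)

/-- The Euclidean Laplacian of a complex-valued function, acting componentwise. -/
def claplacian {n : ℕ} (f : EuclideanSpace ℝ (Fin n) → ℂ)
    (x : EuclideanSpace ℝ (Fin n)) : ℂ :=
  ∑ i, cpderiv (cpderiv f i) i x

/-- The (complex, componentwise) gradient of a complex-valued function. -/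
def cgrad {n : ℕ} (f : EuclideanSpace ℝ (Fin n) → ℂ)
    (x : EuclideanSpace ℝ (Fin n)) : EuclideanSpace ℂ (Fin n) :=
  (WithLp.equiv 2 (Fin n → ℂ)).symm (fun i => cpderiv f i x)

/-- The real gradient of a real-valued function. -/
def rgrad {n : ℕ} (g : EuclideanSpace ℝ (Fin n) → ℝ)
    (x : EuclideanSpace ℝ (Fin n)) : EuclideanSpace ℝ (Fin n) :=
  (WithLp.equiv 2 (Fin n → ℝ)).symm (fun i => rpderiv g i x)

namespace ImPhi

open Metric Filter Topology

variable {n : ℕ} {φ : EuclideanSpace ℝ (Fin n) → ℂ}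

/-- The `i`-th standard basis vector. -/
abbrev sgl (i : Fin n) : EuclideanSpace ℝ (Fin n) := EuclideanSpace.single i 1

/-- The weight `e^{2 Re φ} = |e^φ|²`. -/
def wgt (φ : EuclideanSpace ℝ (Fin n) → ℂ) (x : EuclideanSpace ℝ (Fin n)) : ℝ :=
  Real.exp (2 * (φ x).re)

/-- The divergence-free vector field `e^{2 Re φ} ∂ᵢ (Im φ)`. -/
def gv (φ : EuclideanSpace ℝ (Fin n) → ℂ) (i : Fin n) (x : EuclideanSpace ℝ (Fin n)) : ℝ :=
  wgt φ x * (cpderiv φ i x).im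

lemma sum_single_smul (v : EuclideanSpace ℝ (Fin n)) : ∑ i, v i • sgl i = v := by
  ext j
  have : (∑ i, v i • sgl i) j = ∑ i, (v i • sgl i) j :=
    by rw [WithLp.ofLp_sum]; exact Finset.sum_apply j Finset.univ _
  rw [this]
  simp [sgl, EuclideanSpace.single_apply]

section PDE
variable (hφ : ContDiff ℝ 2 φ)
include hφ

lemma diff_phi : Differentiable ℝ φ := hφ.differentiable (by norm_num)

lemma contDiff_cpderiv (i : Fin n) : ContDiff ℝ 1 (cpderiv φ i) := by
  have h1 : ContDiff ℝ 1 (fderiv ℝ φ) := hφ.fderiv_right (m := 1) (by norm_num)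
  exact h1.clm_apply contDiff_const

lemma hasFDerivAt_cpderiv (i : Fin n) (x) :
    HasFDerivAt (cpderiv φ i) (fderiv ℝ (cpderiv φ i) x) x :=
  (((contDiff_cpderiv hφ i).differentiable one_ne_zero) x).hasFDerivAt

lemma hasFDerivAt_exp_phi (x) :
    HasFDerivAt (fun y => Complex.exp (φ y)) (Complex.exp (φ x) • fderiv ℝ φ x) x :=
  ((diff_phi hφ x).hasFDerivAt).cexp

lemma cpderiv_exp_phi (i : Fin n) (x) :
    cpderiv (fun y => Complex.exp (φ y)) i x = Complex.exp (φ x) * cpderiv φ i x := by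
  rw [cpderiv, (hasFDerivAt_exp_phi hφ x).fderiv]
  simp [cpderiv, smul_eq_mul]

lemma claplacian_exp_phi (x) :
    claplacian (fun y => Complex.exp (φ y)) x =
      Complex.exp (φ x) *
        ∑ i, ((cpderiv φ i x) ^ 2 + fderiv ℝ (cpderiv φ i) x (sgl i)) := by
  rw [claplacian, Finset.mul_sum]
  refine Finset.sum_congr rfl fun i _ => ?_
  have hfi : cpderiv (fun y => Complex.exp (φ y)) i
      = fun y => Complex.exp (φ y) * cpderiv φ i y :=
    funext fun y => cpderiv_exp_phi hφ i y
  have hprod : HasFDerivAt (fun y => Complex.exp (φ y) * cpderiv φ i y)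
      (Complex.exp (φ x) • fderiv ℝ (cpderiv φ i) x +
        (Complex.exp (φ x) • fderiv ℝ φ x).smulRight (cpderiv φ i x)) x :=
    (hasFDerivAt_exp_phi hφ x).mul' (hasFDerivAt_cpderiv hφ i x)
  rw [cpderiv, hfi, hprod.fderiv]
  simp only [ContinuousLinearMap.add_apply, ContinuousLinearMap.smul_apply,
    ContinuousLinearMap.smulRight_apply, smul_eq_mul]
  have : cpderiv φ i x = fderiv ℝ φ x (sgl i) := rfl
  rw [← this]
  ring

lemma hasFDerivAt_re (x) :
    HasFDerivAt (fun y => (φ y).re) (Complex.reCLM.comp (fderiv ℝ φ x)) x :=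
  Complex.reCLM.hasFDerivAt.comp x ((hφ.differentiable (by norm_num) x).hasFDerivAt)

lemma hasFDerivAt_im (x) :
    HasFDerivAt (fun y => (φ y).im) (Complex.imCLM.comp (fderiv ℝ φ x)) x :=
  Complex.imCLM.hasFDerivAt.comp x ((hφ.differentiable (by norm_num) x).hasFDerivAt)

lemma hasFDerivAt_wgt (x) :
    HasFDerivAt (wgt φ) (wgt φ x • ((2:ℝ) • (Complex.reCLM.comp (fderiv ℝ φ x)))) x := by
  have h2 : HasFDerivAt (fun y => 2 * (φ y).re)
      ((2:ℝ) • (Complex.reCLM.comp (fderiv ℝ φ x))) x :=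
    (hasFDerivAt_re hφ x).const_mul 2
  exact h2.exp

lemma hasFDerivAt_gv (i : Fin n) (x) :
    HasFDerivAt (gv φ i)
      (wgt φ x • (Complex.imCLM.comp (fderiv ℝ (cpderiv φ i) x)) +
        (wgt φ x • ((2:ℝ) • (Complex.reCLM.comp (fderiv ℝ φ x)))).smulRight
          ((cpderiv φ i x).im)) x := by
  have hc : HasFDerivAt (fun y => (cpderiv φ i y).im)
      (Complex.imCLM.comp (fderiv ℝ (cpderiv φ i) x)) x :=
    Complex.imCLM.hasFDerivAt.comp x
      (((contDiff_cpderiv hφ i).differentiable one_ne_zero) x).hasFDerivAt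
  exact (hasFDerivAt_wgt hφ x).mul' hc

lemma fderiv_gv_apply (i : Fin n) (x) :
    fderiv ℝ (gv φ i) x (sgl i) =
      wgt φ x * ((fderiv ℝ (cpderiv φ i) x (sgl i)).im
        + 2 * (cpderiv φ i x).re * (cpderiv φ i x).im) := by
  rw [(hasFDerivAt_gv hφ i x).fderiv]
  simp only [ContinuousLinearMap.add_apply, ContinuousLinearMap.smul_apply,
    ContinuousLinearMap.smulRight_apply, ContinuousLinearMap.coe_comp', Function.comp_apply,
    Complex.imCLM_apply, Complex.reCLM_apply, smul_eq_mul]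
  have : cpderiv φ i x = fderiv ℝ φ x (sgl i) := rfl
  rw [← this]
  ring

lemma contDiff_wgt : ContDiff ℝ 1 (wgt φ) := by
  have : ContDiff ℝ 1 fun x => 2 * (φ x).re :=
    contDiff_const.mul (Complex.reCLM.contDiff.comp (hφ.of_le (by norm_num)))
  exact Real.contDiff_exp.comp this

lemma contDiff_gv (i : Fin n) : ContDiff ℝ 1 (gv φ i) :=
  (contDiff_wgt hφ).mul (Complex.imCLM.contDiff.comp (contDiff_cpderiv hφ i))

lemma continuous_fderiv_gv (i : Fin n) :
    Continuous (fun x => fderiv ℝ (gv φ i) x (sgl i)) := by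
  have h1 : ContDiff ℝ 1 (cpderiv φ i) := contDiff_cpderiv hφ i
  have h2 : Continuous (fderiv ℝ (cpderiv φ i)) := h1.continuous_fderiv one_ne_zero
  have h3 : Continuous fun x => (fderiv ℝ (cpderiv φ i) x (sgl i)).im :=
    Complex.continuous_im.comp (h2.clm_apply continuous_const)
  have heq : (fun x => fderiv ℝ (gv φ i) x (sgl i)) =
      fun x => wgt φ x * ((fderiv ℝ (cpderiv φ i) x (sgl i)).im
        + 2 * (cpderiv φ i x).re * (cpderiv φ i x).im) :=
    funext fun x => fderiv_gv_apply hφ i x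
  rw [heq]
  have hψ : Continuous (cpderiv φ i) := h1.continuous
  exact (contDiff_wgt hφ).continuous.mul
    (h3.add ((continuous_const.mul (Complex.continuous_re.comp hψ)).mul
      (Complex.continuous_im.comp hψ)))

/-- Integration by parts against a compactly supported C¹ function. -/
lemma ibp (u : EuclideanSpace ℝ (Fin n) → ℝ) (hu : ContDiff ℝ 1 u)
    (hcs : HasCompactSupport u) (i : Fin n) :
    ∫ x, u x * fderiv ℝ (gv φ i) x (sgl i) = - ∫ x, fderiv ℝ u x (sgl i) * gv φ i x := by
  have hgc : Continuous (gv φ i) := (contDiff_gv hφ i).continuous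
  have hu' : Continuous (fderiv ℝ u) := hu.continuous_fderiv one_ne_zero
  have hcs' : HasCompactSupport (fun x => fderiv ℝ u x (sgl i)) := by
    refine HasCompactSupport.mono (hcs.fderiv ℝ) ?_
    intro x hx
    simp only [Function.mem_support, ne_eq] at hx ⊢
    intro h0
    exact hx (by rw [h0]; simp)
  refine integral_mul_fderiv_eq_neg_fderiv_mul_of_integrable ?_ ?_ ?_
    (fun x _ => hu.differentiable one_ne_zero x) (fun x _ => (contDiff_gv hφ i).differentiable one_ne_zero x)
  · exact ((hu'.clm_apply continuous_const).mul hgc).integrable_of_hasCompactSupport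
      hcs'.mul_right
  · exact ((hu.continuous).mul (continuous_fderiv_gv hφ i)).integrable_of_hasCompactSupport
      hcs.mul_right
  · exact ((hu.continuous).mul hgc).integrable_of_hasCompactSupport hcs.mul_right

variable {V : EuclideanSpace ℝ (Fin n) → ℝ}
variable (hsum : ∀ x, ∑ i, ((cpderiv φ i x) ^ 2 + fderiv ℝ (cpderiv φ i) x (sgl i)) = (V x : ℂ))
include hsum

omit hφ in
lemma im_sum_zero (x) :
    ∑ i, (2 * (cpderiv φ i x).re * (cpderiv φ i x).im
      + (fderiv ℝ (cpderiv φ i) x (sgl i)).im) = 0 := by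
  have h := congrArg Complex.im (hsum x)
  rw [Complex.im_sum] at h
  simp only [Complex.add_im, Complex.ofReal_im] at h
  rw [← h]
  refine Finset.sum_congr rfl fun i _ => ?_
  rw [sq]
  simp [Complex.mul_im]
  ring

lemma div_gv_zero (x) : ∑ i, fderiv ℝ (gv φ i) x (sgl i) = 0 := by
  have him := im_sum_zero hsum x
  calc ∑ i, fderiv ℝ (gv φ i) x (sgl i)
      = ∑ i, wgt φ x * ((fderiv ℝ (cpderiv φ i) x (sgl i)).im
          + 2 * (cpderiv φ i x).re * (cpderiv φ i x).im) :=
        Finset.sum_congr rfl fun i _ => fderiv_gv_apply hφ i x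
    _ = wgt φ x * ∑ i, (2 * (cpderiv φ i x).re * (cpderiv φ i x).im
          + (fderiv ℝ (cpderiv φ i) x (sgl i)).im) := by
        rw [Finset.mul_sum]; exact Finset.sum_congr rfl fun i _ => by ring
    _ = 0 := by rw [him, mul_zero]

/-- The summed integration by parts identity: testing the divergence-free field against
the gradient of any compactly supported C¹ function gives zero. -/
lemma sum_ibp (u : EuclideanSpace ℝ (Fin n) → ℝ) (hu : ContDiff ℝ 1 u)
    (hcs : HasCompactSupport u) :
    ∫ x, ∑ i, fderiv ℝ u x (sgl i) * gv φ i x = 0 := by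
  have hu' : Continuous (fderiv ℝ u) := hu.continuous_fderiv one_ne_zero
  have hcs' : ∀ i : Fin n, HasCompactSupport (fun x => fderiv ℝ u x (sgl i)) := by
    intro i
    refine HasCompactSupport.mono (hcs.fderiv ℝ) ?_
    intro x hx
    simp only [Function.mem_support, ne_eq] at hx ⊢
    intro h0
    exact hx (by rw [h0]; simp)
  have hint : ∀ i : Fin n, Integrable fun x => fderiv ℝ u x (sgl i) * gv φ i x := fun i =>
    ((hu'.clm_apply continuous_const).mul
      (contDiff_gv hφ i).continuous).integrable_of_hasCompactSupport (hcs' i).mul_right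
  have hint2 : ∀ i : Fin n, Integrable fun x => u x * fderiv ℝ (gv φ i) x (sgl i) := fun i =>
    ((hu.continuous).mul (continuous_fderiv_gv hφ i)).integrable_of_hasCompactSupport
      hcs.mul_right
  rw [integral_finset_sum _ (fun i _ => hint i)]
  have h1 : ∀ i : Fin n, ∫ x, fderiv ℝ u x (sgl i) * gv φ i x
      = - ∫ x, u x * fderiv ℝ (gv φ i) x (sgl i) := by
    intro i
    rw [ibp hφ u hu hcs i]
    ring
  rw [Finset.sum_congr rfl fun i _ => h1 i]
  rw [Finset.sum_neg_distrib, ← integral_finset_sum _ (fun i _ => hint2 i)]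
  have hz : ∀ x, ∑ i, u x * fderiv ℝ (gv φ i) x (sgl i) = 0 := by
    intro x
    rw [← Finset.mul_sum, div_gv_zero hφ hsum x, mul_zero]
  simp only [hz, integral_zero, neg_zero]

end PDE

lemma tail_tendsto (G : EuclideanSpace ℝ (Fin n) → ℝ) (hG : Integrable G) :
    Tendsto (fun k : ℕ => ∫ x in (ball (0:EuclideanSpace ℝ (Fin n)) ((k:ℝ)+1))ᶜ, G x)
      atTop (𝓝 0) := by
  have hmono : Monotone fun k : ℕ => ball (0:EuclideanSpace ℝ (Fin n)) ((k:ℝ)+1) := by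
    intro a b hab
    have : (a:ℝ) ≤ b := Nat.cast_le.mpr hab
    exact ball_subset_ball (by linarith)
  have hunion : ⋃ k : ℕ, ball (0:EuclideanSpace ℝ (Fin n)) ((k:ℝ)+1) = Set.univ := by
    ext x
    simp only [Set.mem_iUnion, mem_ball, dist_zero_right, Set.mem_univ, iff_true]
    obtain ⟨k, hk⟩ := exists_nat_gt ‖x‖
    exact ⟨k, by linarith⟩
  have h1 : Tendsto (fun k : ℕ => ∫ x in ball (0:EuclideanSpace ℝ (Fin n)) ((k:ℝ)+1), G x)
      atTop (𝓝 (∫ x, G x)) := by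
    have := tendsto_setIntegral_of_monotone (fun k => measurableSet_ball) hmono
      (by rw [hunion]; exact hG.integrableOn)
    simpa [hunion] using this
  have h2 : ∀ k : ℕ, (∫ x in (ball (0:EuclideanSpace ℝ (Fin n)) ((k:ℝ)+1))ᶜ, G x)
      = (∫ x, G x) - ∫ x in ball (0:EuclideanSpace ℝ (Fin n)) ((k:ℝ)+1), G x := by
    intro k
    have := integral_add_compl (measurableSet_ball
      (x := (0:EuclideanSpace ℝ (Fin n))) (ε := (k:ℝ)+1)) hG
    linarith
  simp only [h2]
  simpa using (tendsto_const_nhds (x := ∫ x, G x)).sub h1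

lemma eq_zero_of_integral_zero (G : EuclideanSpace ℝ (Fin n) → ℝ) (hc : Continuous G)
    (hnn : ∀ x, 0 ≤ G x) (hG : Integrable G) (hz : ∫ x, G x = 0) : ∀ x, G x = 0 := by
  by_contra h
  push_neg at h
  obtain ⟨x, hx⟩ := h
  have hpos : 0 < ∫ x, G x := by
    rw [integral_pos_iff_support_of_nonneg hnn hG]
    have hopen : IsOpen (Function.support G) := by
      have : Function.support G = G ⁻¹' {0}ᶜ := by
        ext y; simp [Function.mem_support]
      rw [this]
      exact (isClosed_singleton.preimage hc).isOpen_compl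
    exact hopen.measure_pos volume ⟨x, hx⟩
  linarith

lemma exists_cutoff : ∃ χ : EuclideanSpace ℝ (Fin n) → ℝ, ContDiff ℝ 1 χ ∧
    HasCompactSupport χ ∧ (∀ x, ‖x‖ ≤ 1 → χ x = 1) ∧ (∀ x, 0 ≤ χ x) ∧ (∀ x, χ x ≤ 1) ∧
    (∀ x, 2 ≤ ‖x‖ → χ x = 0) := by
  let c : ContDiffBump (0 : EuclideanSpace ℝ (Fin n)) := ⟨1, 2, one_pos, one_lt_two⟩
  refine ⟨c, c.contDiff, c.hasCompactSupport, fun x hx => ?_, fun x => c.nonneg,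
    fun x => c.le_one, fun x hx => ?_⟩
  · exact c.one_of_mem_closedBall (by simpa [Metric.mem_closedBall] using hx)
  · have : x ∉ Function.support c := by
      rw [c.support_eq]
      simp only [Metric.mem_ball, dist_zero_right, not_lt]
      exact hx
    simpa using Function.notMem_support.mp this

lemma hasFDerivAt_scaled (χ : EuclideanSpace ℝ (Fin n) → ℝ) (hχ : ContDiff ℝ 1 χ) (k : ℝ) (x) :
    HasFDerivAt (fun y => χ (k⁻¹ • y)) (k⁻¹ • fderiv ℝ χ (k⁻¹ • x)) x := by
  have hid : HasFDerivAt (fun y : EuclideanSpace ℝ (Fin n) => k⁻¹ • y)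
      (k⁻¹ • ContinuousLinearMap.id ℝ _) x := (hasFDerivAt_id x).const_smul k⁻¹
  have := ((hχ.differentiable one_ne_zero (k⁻¹ • x)).hasFDerivAt).comp x hid
  refine this.congr_fderiv ?_
  ext v
  simp

end ImPhi

open ImPhi Metric Filter Topology in
set_option maxHeartbeats 2000000 in
/-- Theorem 2 of the paper (Euclidean case): for real-valued `V`, a nowhere-vanishing
admissible kernel element `f = exp ∘ φ` of `−Δ + V`, with bounded phase `Im φ`,
has constant phase. -/
theorem im_phi_constant {n : ℕ} (hn : 1 ≤ n)
    (V : EuclideanSpace ℝ (Fin n) → ℝ) (hV : Continuous V)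
    (φ : EuclideanSpace ℝ (Fin n) → ℂ) (hφ : ContDiff ℝ 2 φ)
    (f : EuclideanSpace ℝ (Fin n) → ℂ) (hf : f = fun x => Complex.exp (φ x))
    (hfL2 : MemLp f 2 (volume : Measure (EuclideanSpace ℝ (Fin n))))
    (hgradL2 : MemLp (fun x => cgrad f x) 2 (volume : Measure (EuclideanSpace ℝ (Fin n))))
    (heq : ∀ x, -claplacian f x + (V x : ℂ) * f x = 0)
    (hbdd : ∃ C, ∀ x, |(φ x).im| ≤ C) :
    ∀ x y, (φ x).im = (φ y).im := by
  classical
  obtain ⟨C, hC⟩ := hbdd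
  subst hf
  -- the basic quantities
  set G : EuclideanSpace ℝ (Fin n) → ℝ :=
    fun x => wgt φ x * ∑ i, ((cpderiv φ i x).im)^2 with hGdef
  have hwpos : ∀ x, 0 < wgt φ x := fun x => Real.exp_pos _
  have hGnn : ∀ x, 0 ≤ G x := fun x =>
    mul_nonneg (hwpos x).le (Finset.sum_nonneg fun i _ => sq_nonneg _)
  have hψc : ∀ i : Fin n, Continuous (cpderiv φ i) := fun i => (contDiff_cpderiv hφ i).continuous
  have hGc : Continuous G := by
    refine (contDiff_wgt hφ).continuous.mul ?_
    exact continuous_finset_sum _ fun i _ =>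
      ((Complex.continuous_im.comp (hψc i)).pow 2)
  -- the pointwise PDE
  have hsum : ∀ x, ∑ i, ((cpderiv φ i x) ^ 2 + fderiv ℝ (cpderiv φ i) x (sgl i)) = (V x : ℂ) := by
    intro x
    have h1 := heq x
    rw [claplacian_exp_phi hφ x] at h1
    refine mul_left_cancel₀ (Complex.exp_ne_zero (φ x)) ?_
    linear_combination -h1
  -- integrability of the weight
  have hfC2 : ContDiff ℝ 2 (fun y => Complex.exp (φ y)) :=
hφ.cexp
  have hw_eq : (fun x => ‖Complex.exp (φ x)‖^2) = wgt φ := by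
    funext x
    rw [Complex.norm_exp, sq, ← Real.exp_add, ← two_mul]
    rfl
  have hIw : Integrable (wgt φ) := by
    have hfm : AEStronglyMeasurable (fun y => Complex.exp (φ y))
        (volume : Measure (EuclideanSpace ℝ (Fin n))) :=
      (Complex.continuous_exp.comp hφ.continuous).aestronglyMeasurable
    have := (memLp_two_iff_integrable_sq_norm hfm).1 hfL2
    rwa [hw_eq] at this
  -- integrability of `G`
  have hnormz : ∀ z : ℂ, ‖z‖^2 = z.re^2 + z.im^2 := fun z => by
    rw [Complex.sq_norm, Complex.normSq_apply]; ring
  have hIG : Integrable G := by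
    have hgc : Continuous fun x => cgrad (fun y => Complex.exp (φ y)) x := by
      refine Continuous.comp ?_ (continuous_pi fun i => (contDiff_cpderiv hfC2 i).continuous)
      exact (PiLp.continuous_toLp 2 (fun _ : Fin n => ℂ))
    have hint := (memLp_two_iff_integrable_sq_norm hgc.aestronglyMeasurable).1 hgradL2
    have hbound : ∀ x, ‖G x‖ ≤ ‖cgrad (fun y => Complex.exp (φ y)) x‖^2 := by
      intro x
      have h1 : ‖cgrad (fun y => Complex.exp (φ y)) x‖^2
          = ∑ i, ‖cpderiv (fun y => Complex.exp (φ y)) i x‖^2 := by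
        rw [EuclideanSpace.norm_eq]
        rw [Real.sq_sqrt (Finset.sum_nonneg fun i _ => sq_nonneg _)]
        exact Finset.sum_congr rfl fun i _ => rfl
      have h2 : ∀ i : Fin n, ‖cpderiv (fun y => Complex.exp (φ y)) i x‖^2
          = wgt φ x * ((cpderiv φ i x).re^2 + (cpderiv φ i x).im^2) := by
        intro i
        rw [cpderiv_exp_phi hφ i x, norm_mul, mul_pow]
        congr 1
        · rw [Complex.norm_exp, sq, ← Real.exp_add, ← two_mul]
          rfl
        · exact hnormz _
      rw [Real.norm_eq_abs, _root_.abs_of_nonneg (hGnn x), h1]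
      rw [Finset.sum_congr rfl fun i _ => h2 i, ← Finset.mul_sum, hGdef]
      refine mul_le_mul_of_nonneg_left ?_ (hwpos x).le
      exact Finset.sum_le_sum fun i _ => by nlinarith [sq_nonneg (cpderiv φ i x).re]
    exact hint.mono' hGc.aestronglyMeasurable (ae_of_all _ hbound)
  -- the integral of `G` vanishes
  have hGzero : ∫ x, G x = 0 := by
    have hC0 : 0 ≤ C := le_trans (abs_nonneg _) (hC 0)
    obtain ⟨χ, hχ, hχcs, hχ1, hχ0, hχle, hχsupp⟩ := exists_cutoff (n := n)
    obtain ⟨M, hM⟩ := (hχcs.fderiv ℝ).exists_bound_of_continuous (hχ.continuous_fderiv one_ne_zero)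
    have hM0 : 0 ≤ M := le_trans (norm_nonneg _) (hM 0)
    have hκ1 : ∀ k : ℕ, (1:ℝ) ≤ (k:ℝ) + 1 := fun k => by
      have := Nat.cast_nonneg (α := ℝ) k; linarith
    have hκpos : ∀ k : ℕ, (0:ℝ) < (k:ℝ) + 1 := fun k => by positivity
    set χk : ℕ → EuclideanSpace ℝ (Fin n) → ℝ :=
      fun k x => χ (((k:ℝ)+1)⁻¹ • x) with hχkdef
    have hχkC : ∀ k, ContDiff ℝ 1 (χk k) := fun k =>
      hχ.comp (contDiff_const_smul _)
    have hχkd : ∀ k x, HasFDerivAt (χk k)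
        ((((k:ℝ)+1))⁻¹ • fderiv ℝ χ ((((k:ℝ)+1))⁻¹ • x)) x :=
      fun k x => hasFDerivAt_scaled χ hχ (((k:ℝ)+1)) x
    have hnorm_smul : ∀ (k : ℕ) (x : EuclideanSpace ℝ (Fin n)),
        ‖(((k:ℝ)+1))⁻¹ • x‖ = (((k:ℝ)+1))⁻¹ * ‖x‖ := by
      intro k x
      rw [norm_smul, Real.norm_eq_abs, _root_.abs_of_nonneg (inv_nonneg.mpr (hκpos k).le)]
    have hχkcs : ∀ k, HasCompactSupport (χk k) := by
      intro k
      refine HasCompactSupport.intro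
        (isCompact_closedBall (0:EuclideanSpace ℝ (Fin n)) (2 * ((k:ℝ)+1))) ?_
      intro x hx
      simp only [Metric.mem_closedBall, dist_zero_right, not_le] at hx
      refine hχsupp _ ?_
      rw [hnorm_smul]
      rw [le_inv_mul_iff₀ (hκpos k)]
      nlinarith [hκpos k]
    have hχk1 : ∀ (k : ℕ) x, ‖x‖ ≤ (k:ℝ)+1 → χk k x = 1 := by
      intro k x hx
      refine hχ1 _ ?_
      rw [hnorm_smul, inv_mul_le_iff₀ (hκpos k), mul_one]
      exact hx
    have hχknn : ∀ k x, 0 ≤ χk k x := fun k x => hχ0 _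
    have hχkle : ∀ k x, χk k x ≤ 1 := fun k x => hχle _
    have hχkfd0 : ∀ (k : ℕ) x, ‖x‖ < (k:ℝ)+1 → fderiv ℝ (χk k) x = 0 := by
      intro k x hx
      have hmem : Metric.ball (0:EuclideanSpace ℝ (Fin n)) ((k:ℝ)+1) ∈ 𝓝 x :=
        Metric.isOpen_ball.mem_nhds (by simpa [Metric.mem_ball, dist_zero_right] using hx)
      have hev : χk k =ᶠ[𝓝 x] fun _ => (1:ℝ) := by
        refine Filter.eventually_of_mem hmem ?_
        intro y hy
        exact hχk1 k y (le_of_lt (by simpa [Metric.mem_ball, dist_zero_right] using hy))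
      rw [hev.fderiv_eq]
      exact fderiv_const_apply 1
    have hsgl_norm : ∀ i : Fin n, ‖sgl i‖ = 1 := fun i => by
      simp [sgl, EuclideanSpace.norm_single]
    have hdbd : ∀ k x (i : Fin n), |fderiv ℝ (χk k) x (sgl i)| ≤ M := by
      intro k x i
      have h1 : ‖fderiv ℝ (χk k) x (sgl i)‖ ≤ ‖fderiv ℝ (χk k) x‖ * ‖sgl i‖ :=
        ContinuousLinearMap.le_opNorm _ _
      rw [hsgl_norm, mul_one] at h1
      refine le_trans h1 ?_
      rw [(hχkd k x).fderiv, norm_smul, Real.norm_eq_abs,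
        _root_.abs_of_nonneg (inv_nonneg.mpr (hκpos k).le)]
      calc (((k:ℝ)+1))⁻¹ * ‖fderiv ℝ χ ((((k:ℝ)+1))⁻¹ • x)‖ ≤ 1 * M := by
            refine mul_le_mul ?_ (hM _) (norm_nonneg _) one_pos.le
            exact inv_le_one_of_one_le₀ (hκ1 k)
        _ = M := one_mul M
    -- the test functions
    set u : ℕ → EuclideanSpace ℝ (Fin n) → ℝ :=
      fun k x => (χk k x * χk k x) * (φ x).im with hudef
    have hbC : ContDiff ℝ 1 fun y => (φ y).im :=
      Complex.imCLM.contDiff.comp (hφ.of_le (by norm_num))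
    have hbc : Continuous fun y => (φ y).im := hbC.continuous
    have huC : ∀ k, ContDiff ℝ 1 (u k) := fun k => ((hχkC k).mul (hχkC k)).mul hbC
    have hucs : ∀ k, HasCompactSupport (u k) := fun k => ((hχkcs k).mul_right).mul_right
    have hDu : ∀ k x (i : Fin n), fderiv ℝ (u k) x (sgl i)
        = (χk k x * χk k x) * (cpderiv φ i x).im
          + (2 * χk k x * fderiv ℝ (χk k) x (sgl i)) * (φ x).im := by
      intro k x i
      have hd : HasFDerivAt (χk k) (fderiv ℝ (χk k) x) x :=
        ((hχkC k).differentiable one_ne_zero x).hasFDerivAt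
      have hq : HasFDerivAt (fun y => χk k y * χk k y)
          (χk k x • fderiv ℝ (χk k) x + (fderiv ℝ (χk k) x).smulRight (χk k x)) x :=
        hd.mul' hd
      have hu' : HasFDerivAt (u k)
          ((χk k x * χk k x) • (Complex.imCLM.comp (fderiv ℝ φ x))
            + (χk k x • fderiv ℝ (χk k) x
                + (fderiv ℝ (χk k) x).smulRight (χk k x)).smulRight ((φ x).im)) x :=
        hq.mul' (hasFDerivAt_im hφ x)
      rw [hu'.fderiv]
      simp only [ContinuousLinearMap.add_apply, ContinuousLinearMap.smul_apply,
        ContinuousLinearMap.smulRight_apply, ContinuousLinearMap.coe_comp', Function.comp_apply,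
        Complex.imCLM_apply, smul_eq_mul]
      rw [show (fderiv ℝ φ x) (sgl i) = cpderiv φ i x from rfl]
      ring
    -- the error term
    set P : ℕ → EuclideanSpace ℝ (Fin n) → ℝ := fun k x =>
      χk k x * (2 * (φ x).im * wgt φ x
        * ∑ i, fderiv ℝ (χk k) x (sgl i) * (cpderiv φ i x).im) with hPdef
    have hsplit : ∀ k x, ∑ i, fderiv ℝ (u k) x (sgl i) * gv φ i x
        = (χk k x * χk k x) * G x + P k x := by
      intro k x
      have h1 : (χk k x * χk k x) * G x
          = ∑ i, (χk k x * χk k x) * (wgt φ x * ((cpderiv φ i x).im)^2) := by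
        simp only [hGdef, Finset.mul_sum]
      have h2 : P k x = ∑ i, χk k x * (2 * (φ x).im * wgt φ x
          * (fderiv ℝ (χk k) x (sgl i) * (cpderiv φ i x).im)) := by
        simp only [hPdef, Finset.mul_sum]
      rw [h1, h2, ← Finset.sum_add_distrib]
      refine Finset.sum_congr rfl fun i _ => ?_
      rw [hDu k x i, gv]
      ring
    have hdC : ∀ k (i : Fin n), Continuous fun x => fderiv ℝ (χk k) x (sgl i) := fun k i =>
      ((hχkC k).continuous_fderiv one_ne_zero).clm_apply continuous_const
    have hIQ : ∀ k, Integrable fun x => (χk k x * χk k x) * G x := fun k =>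
      (((hχkC k).continuous.mul (hχkC k).continuous).mul hGc).integrable_of_hasCompactSupport
        ((hχkcs k).mul_right).mul_right
    have hIP : ∀ k, Integrable (P k) := by
      intro k
      refine Continuous.integrable_of_hasCompactSupport ?_ (hχkcs k).mul_right
      refine (hχkC k).continuous.mul ?_
      refine Continuous.mul ?_ ?_
      · exact (continuous_const.mul hbc).mul (contDiff_wgt hφ).continuous
      · exact continuous_finset_sum _ fun i _ =>
          (hdC k i).mul (Complex.continuous_im.comp (hψc i))
    have hQP : ∀ k, (∫ x, (χk k x * χk k x) * G x) = - ∫ x, P k x := by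
      intro k
      have h0 := sum_ibp hφ hsum (u k) (huC k) (hucs k)
      have h1 : ∫ x, ∑ i, fderiv ℝ (u k) x (sgl i) * gv φ i x
          = (∫ x, (χk k x * χk k x) * G x) + ∫ x, P k x := by
        calc ∫ x, ∑ i, fderiv ℝ (u k) x (sgl i) * gv φ i x
            = ∫ x, ((χk k x * χk k x) * G x + P k x) :=
              integral_congr_ae (ae_of_all _ fun x => hsplit k x)
          _ = _ := integral_add (hIQ k) (hIP k)
      rw [h0] at h1
      linarith
    -- the bound function and its tail
    set H : EuclideanSpace ℝ (Fin n) → ℝ :=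
      fun x => C * M * ((n:ℝ) * wgt φ x + G x) with hHdef
    have hIH : Integrable H := ((hIw.const_mul ((n:ℝ))).add hIG).const_mul (C*M)
    have hPbd : ∀ k x, |P k x| ≤ H x := by
      intro k x
      have hT0 : 0 ≤ ∑ i, ((cpderiv φ i x).im)^2 :=
        Finset.sum_nonneg fun i _ => sq_nonneg _
      have hS : |∑ i, fderiv ℝ (χk k) x (sgl i) * (cpderiv φ i x).im|
          ≤ M * ((n:ℝ) + ∑ i, ((cpderiv φ i x).im)^2) / 2 := by
        calc |∑ i, fderiv ℝ (χk k) x (sgl i) * (cpderiv φ i x).im|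
            ≤ ∑ i, |fderiv ℝ (χk k) x (sgl i) * (cpderiv φ i x).im| :=
              Finset.abs_sum_le_sum_abs _ _
          _ ≤ ∑ i, M * (1 + ((cpderiv φ i x).im)^2) / 2 := by
              refine Finset.sum_le_sum fun i _ => ?_
              rw [abs_mul]
              have h1 : |(cpderiv φ i x).im| ≤ (1 + ((cpderiv φ i x).im)^2) / 2 := by
                nlinarith [sq_nonneg (|(cpderiv φ i x).im| - 1), _root_.sq_abs ((cpderiv φ i x).im)]
              calc |fderiv ℝ (χk k) x (sgl i)| * |(cpderiv φ i x).im|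
                  ≤ M * ((1 + ((cpderiv φ i x).im)^2) / 2) :=
                    mul_le_mul (hdbd k x i) h1 (abs_nonneg _) hM0
                _ = M * (1 + ((cpderiv φ i x).im)^2) / 2 := by ring
          _ = M * ((n:ℝ) + ∑ i, ((cpderiv φ i x).im)^2) / 2 := by
              have hh : ∑ i : Fin n, M * (1 + ((cpderiv φ i x).im)^2) / 2
                  = ∑ i : Fin n, (M/2 + M/2 * ((cpderiv φ i x).im)^2) :=
                Finset.sum_congr rfl fun i _ => by ring
              rw [hh, Finset.sum_add_distrib, Finset.sum_const, ← Finset.mul_sum,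
                Finset.card_univ, Fintype.card_fin, nsmul_eq_mul]
              ring
      have habs : |P k x| = |χk k x| * (2 * |(φ x).im| * wgt φ x
          * |∑ i, fderiv ℝ (χk k) x (sgl i) * (cpderiv φ i x).im|) := by
        rw [hPdef]
        dsimp only
        rw [abs_mul, abs_mul, abs_mul, abs_mul, _root_.abs_two,
          _root_.abs_of_pos (hwpos x)]
      rw [habs]
      have hwG : wgt φ x * (∑ i, ((cpderiv φ i x).im)^2) = G x := by rw [hGdef]
      calc |χk k x| * (2 * |(φ x).im| * wgt φ x
            * |∑ i, fderiv ℝ (χk k) x (sgl i) * (cpderiv φ i x).im|)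
          ≤ 1 * (2 * C * wgt φ x
            * (M * ((n:ℝ) + ∑ i, ((cpderiv φ i x).im)^2) / 2)) := by
            have hb := hC x
            have hχabs : |χk k x| ≤ 1 := by
              rw [_root_.abs_of_nonneg (hχknn k x)]; exact hχkle k x
            gcongr
            · exact mul_nonneg (mul_nonneg (mul_nonneg two_pos.le (abs_nonneg _))
                (hwpos x).le) (abs_nonneg _)
            · exact mul_nonneg (mul_nonneg two_pos.le hC0) (hwpos x).le
            · exact (hwpos x).le
          _ = C * M * ((n:ℝ) * wgt φ x
              + wgt φ x * ∑ i, ((cpderiv φ i x).im)^2) := by ring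
          _ = H x := by rw [hHdef, hwG]
    have hPz : ∀ (k : ℕ) x, ‖x‖ < (k:ℝ)+1 → P k x = 0 := by
      intro k x hx
      have hz : ∀ i : Fin n, fderiv ℝ (χk k) x (sgl i) = 0 := fun i => by
        rw [hχkfd0 k x hx]; rfl
      rw [hPdef]
      dsimp only
      rw [Finset.sum_eq_zero fun i _ => by rw [hz i, zero_mul]]
      ring
    have hPint : ∀ k : ℕ, |∫ x, P k x|
        ≤ ∫ x in (Metric.ball (0:EuclideanSpace ℝ (Fin n)) ((k:ℝ)+1))ᶜ, H x := by
      intro k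
      have h1 : ∫ x in (Metric.ball (0:EuclideanSpace ℝ (Fin n)) ((k:ℝ)+1))ᶜ, P k x
          = ∫ x, P k x := by
        refine setIntegral_eq_integral_of_forall_compl_eq_zero ?_
        intro x hx
        simp only [Set.notMem_compl_iff, Metric.mem_ball, dist_zero_right] at hx
        exact hPz k x hx
      rw [← h1]
      calc |∫ x in (Metric.ball (0:EuclideanSpace ℝ (Fin n)) ((k:ℝ)+1))ᶜ, P k x|
          ≤ ∫ x in (Metric.ball (0:EuclideanSpace ℝ (Fin n)) ((k:ℝ)+1))ᶜ, |P k x| := by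
            simpa [Real.norm_eq_abs] using
              norm_integral_le_integral_norm (μ := volume.restrict
                (Metric.ball (0:EuclideanSpace ℝ (Fin n)) ((k:ℝ)+1))ᶜ) (fun x => P k x)
        _ ≤ ∫ x in (Metric.ball (0:EuclideanSpace ℝ (Fin n)) ((k:ℝ)+1))ᶜ, H x := by
            refine setIntegral_mono_on ((hIP k).abs.integrableOn) (hIH.integrableOn)
              measurableSet_ball.compl ?_
            intro x _
            exact hPbd k x
    have htail := tail_tendsto H hIH
    have hQtend : Tendsto (fun k : ℕ => ∫ x, (χk k x * χk k x) * G x)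
        atTop (𝓝 (∫ x, G x)) := by
      refine tendsto_integral_of_dominated_convergence G (fun k => ?_) hIG
        (fun k => ae_of_all _ fun x => ?_) (ae_of_all _ fun x => ?_)
      · exact (((hχkC k).continuous.mul (hχkC k).continuous).mul hGc).aestronglyMeasurable
      · rw [Real.norm_eq_abs, _root_.abs_of_nonneg
          (mul_nonneg (mul_nonneg (hχknn k x) (hχknn k x)) (hGnn x))]
        calc (χk k x * χk k x) * G x ≤ 1 * G x := by
              refine mul_le_mul_of_nonneg_right ?_ (hGnn x)
              calc χk k x * χk k x ≤ 1 * 1 :=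
                    mul_le_mul (hχkle k x) (hχkle k x) (hχknn k x) one_pos.le
                _ = 1 := mul_one 1
          _ = G x := one_mul _
      · have hev : ∀ᶠ k : ℕ in atTop, (χk k x * χk k x) * G x = G x := by
          filter_upwards [eventually_ge_atTop ⌈‖x‖⌉₊] with k hk
          have h1 : ‖x‖ ≤ (⌈‖x‖⌉₊ : ℝ) := Nat.le_ceil _
          have h2 : ((⌈‖x‖⌉₊:ℕ):ℝ) ≤ (k:ℝ) := Nat.cast_le.mpr hk
          rw [hχk1 k x (by linarith)]
          ring
        exact Tendsto.congr' (hev.mono fun k hk => hk.symm) tendsto_const_nhds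
    have habs2 : ∀ k : ℕ, |∫ x, (χk k x * χk k x) * G x|
        ≤ ∫ x in (Metric.ball (0:EuclideanSpace ℝ (Fin n)) ((k:ℝ)+1))ᶜ, H x := by
      intro k
      rw [hQP k, abs_neg]
      exact hPint k
    have h1 : |∫ x, G x| ≤ 0 := le_of_tendsto_of_tendsto' hQtend.abs htail habs2
    have h2 : 0 ≤ ∫ x, G x := integral_nonneg hGnn
    have := le_of_abs_le h1
    linarith
  -- hence `G` vanishes identically and the gradient of `Im φ` is zero
  have hGall : ∀ x, G x = 0 := eq_zero_of_integral_zero G hGc hGnn hIG hGzero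
  have hβ : ∀ (x) (i : Fin n), (cpderiv φ i x).im = 0 := by
    intro x i
    have h0 : ∑ i, ((cpderiv φ i x).im)^2 = 0 := by
      have := hGall x
      rw [hGdef] at this
      simpa using (mul_eq_zero.mp this).resolve_left (ne_of_gt (hwpos x))
    have := (Finset.sum_eq_zero_iff_of_nonneg (fun i _ => sq_nonneg _)).mp h0 i (Finset.mem_univ i)
    exact pow_eq_zero_iff two_ne_zero |>.mp this
  have hbdiff : Differentiable ℝ (fun y => (φ y).im) := fun x => (hasFDerivAt_im hφ x).differentiableAt
  have hfd0 : ∀ x, fderiv ℝ (fun y => (φ y).im) x = 0 := by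
    intro x
    rw [(hasFDerivAt_im hφ x).fderiv]
    ext v
    have hv : v = ∑ i, v i • sgl i := (sum_single_smul v).symm
    rw [ContinuousLinearMap.coe_comp', Function.comp_apply]
    rw [ContinuousLinearMap.zero_apply]
    have h2 : (fderiv ℝ φ x) v = ∑ i, v i • cpderiv φ i x := by
      conv_lhs => rw [hv]
      rw [map_sum (fderiv ℝ φ x) (fun i => v i • sgl i) Finset.univ]
      exact Finset.sum_congr rfl fun i _ => (fderiv ℝ φ x).map_smul _ _
    rw [h2, map_sum Complex.imCLM (fun i => v i • cpderiv φ i x) Finset.univ]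
    refine Finset.sum_eq_zero fun i _ => ?_
    rw [_root_.map_smul, show Complex.imCLM (cpderiv φ i x) = (cpderiv φ i x).im from rfl,
      hβ x i, smul_zero]
  intro x y
  exact is_const_of_fderiv_eq_zero hbdiff hfd0 x y
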